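/- arXiv:1907.01715 — 4 statements merged into one kernel-verified Lean document; each statement's English description precedes it below -/
import Mathlib

section
/- The number of border cells in any (d-1)-dimensional integer partition with entries in {1,...,m} is at most m^d - (m-1)^d. -/
namespace Stmt0Aux

variable {e m : ℕ}

/-- The diagonal shift: how far we can move the cell in direction `(-1,...,-1,+1)`. -/
def diag (c : (Fin e → Fin m) × Fin m) : ℕ :=
  Finset.univ.inf' Finset.univ_nonempty
    (Fin.snoc (fun j => ((c.1 j : ℕ))) (m - 1 - (c.2 : ℕ)))

lemma diag_le_x (c : (Fin e → Fin m) × Fin m) (j : Fin e) : diag c ≤ (c.1 j : ℕ) := by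
  have h := Finset.inf'_le
      (f := Fin.snoc (fun j => ((c.1 j : ℕ))) (m - 1 - (c.2 : ℕ)))
      (b := j.castSucc) (Finset.mem_univ _)
  simpa only [diag, Fin.snoc_castSucc] using h

lemma diag_le_t (c : (Fin e → Fin m) × Fin m) : diag c ≤ m - 1 - (c.2 : ℕ) := by
  have h := Finset.inf'_le
      (f := Fin.snoc (fun j => ((c.1 j : ℕ))) (m - 1 - (c.2 : ℕ)))
      (b := Fin.last e) (Finset.mem_univ _)
  simpa only [diag, Fin.snoc_last] using h

lemma diag_eq (c : (Fin e → Fin m) × Fin m) :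
    (∃ j, diag c = (c.1 j : ℕ)) ∨ diag c = m - 1 - (c.2 : ℕ) := by
  obtain ⟨i, -, hi⟩ := Finset.exists_mem_eq_inf' (Finset.univ_nonempty)
      (Fin.snoc (fun j => ((c.1 j : ℕ))) (m - 1 - (c.2 : ℕ)))
  induction i using Fin.lastCases with
  | last => right; simpa [diag, Fin.snoc_last] using hi
  | cast j => left; exact ⟨j, by simpa [diag, Fin.snoc_castSucc] using hi⟩

/-- The base point of the diagonal line through `c`. -/
def base (c : (Fin e → Fin m) × Fin m) : (Fin e → Fin m) × Fin m :=
  (fun j => ⟨(c.1 j : ℕ) - diag c, lt_of_le_of_lt (Nat.sub_le _ _) (c.1 j).isLt⟩,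
   ⟨(c.2 : ℕ) + diag c, by have h1 := diag_le_t c; have h2 := c.2.isLt; omega⟩)

end Stmt0Aux

open Stmt0Aux in
/-- The number of border cells in any `(d-1)`-dimensional integer partition (here the
partition has dimension `e = d - 1`, so the grid has dimension `e + 1`) with entries
in `{1,...,m}` is at most `m^(e+1) - (m-1)^(e+1)`.  Cells of the grid `{1,...,m}^(e+1)`
are encoded as pairs `(x, t) : (Fin e → Fin m) × Fin m`; the cell `(x, t)` is a partition
cell iff `t + 1 ≤ A x`; two cells are adjacent iff they differ by at most `1` in every
coordinate; a border cell is a partition cell adjacent to a non-partition cell. -/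
theorem stmt0 (e m : ℕ) (hm : 1 ≤ m)
    (A : (Fin e → Fin m) → ℕ)
    (hAle : ∀ x, A x ≤ m)
    (hmono : ∀ x y : Fin e → Fin m, (∀ k, x k ≤ y k) → A x ≤ A y) :
    Nat.card {c : (Fin e → Fin m) × Fin m //
        ((c.2 : ℕ) + 1 ≤ A c.1) ∧
        ∃ c' : (Fin e → Fin m) × Fin m,
          (∀ k, ((c.1 k : ℕ) : ℤ) - ((c'.1 k : ℕ) : ℤ) ∈ Set.Icc (-1 : ℤ) 1) ∧
          (((c.2 : ℕ) : ℤ) - ((c'.2 : ℕ) : ℤ)) ∈ Set.Icc (-1 : ℤ) 1 ∧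
          ¬ ((c'.2 : ℕ) + 1 ≤ A c'.1)} ≤
      m ^ (e + 1) - (m - 1) ^ (e + 1) := by
  classical
  set Bp : ((Fin e → Fin m) × Fin m) → Prop := fun c =>
    ((c.2 : ℕ) + 1 ≤ A c.1) ∧
    ∃ c' : (Fin e → Fin m) × Fin m,
      (∀ k, ((c.1 k : ℕ) : ℤ) - ((c'.1 k : ℕ) : ℤ) ∈ Set.Icc (-1 : ℤ) 1) ∧
      (((c.2 : ℕ) : ℤ) - ((c'.2 : ℕ) : ℤ)) ∈ Set.Icc (-1 : ℤ) 1 ∧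
      ¬ ((c'.2 : ℕ) + 1 ≤ A c'.1) with hBp
  set P : ((Fin e → Fin m) × Fin m) → Prop := fun c =>
    (∃ j, (c.1 j : ℕ) = 0) ∨ ((c.2 : ℕ) = m - 1) with hP
  -- at most one border cell on each diagonal line
  have hdominate : ∀ c c' : (Fin e → Fin m) × Fin m, Bp c → Bp c' →
      base c = base c' → diag c ≤ diag c' → c = c' := by
    intro c c' hc hc' hbase hle
    have hx : ∀ j, (c.1 j : ℕ) - diag c = (c'.1 j : ℕ) - diag c' := by
      intro j
      have := congrArg (fun b => ((b.1 j : Fin m) : ℕ)) hbase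
      simpa [base] using this
    have ht : (c.2 : ℕ) + diag c = (c'.2 : ℕ) + diag c' := by
      have := congrArg (fun b => ((b.2 : Fin m) : ℕ)) hbase
      simpa [base] using this
    have hkx := fun j => diag_le_x c j
    have hkx' := fun j => diag_le_x c' j
    by_cases hdk : diag c' - diag c = 0
    · have : diag c = diag c' := by omega
      refine Prod.ext (funext fun j => Fin.ext ?_) (Fin.ext ?_)
      · have := hx j; have := hkx j; have := hkx' j; omega
      · omega
    · exfalso
      obtain ⟨hcpart, w, hw1, hw2, hw3⟩ := hc'
      simp only [Set.mem_Icc] at hw1 hw2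
      have hyx : ∀ j, c.1 j ≤ w.1 j := by
        intro j
        have h1 := (hw1 j).2
        have h2 := hx j
        have h3 := hkx j
        have h4 := hkx' j
        rw [Fin.le_def]
        omega
      have hA := hmono c.1 w.1 hyx
      have hc1 := hc.1
      have hw2' := hw2.1
      omega
  -- every base point satisfies P
  have hPbase : ∀ c : (Fin e → Fin m) × Fin m, P (base c) := by
    intro c
    rcases diag_eq c with ⟨j, hj⟩ | h
    · exact Or.inl ⟨j, by simp [base]; omega⟩
    · refine Or.inr ?_
      have := c.2.isLt
      simp [base]
      omega
  -- the injection into base points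
  have hF : Function.Injective
      (fun c : {c : (Fin e → Fin m) × Fin m // Bp c} =>
        (⟨base c.1, hPbase c.1⟩ : {c : (Fin e → Fin m) × Fin m // P c})) := by
    rintro ⟨c, hc⟩ ⟨c', hc'⟩ h
    simp only [Subtype.mk.injEq] at h ⊢
    rcases le_total (diag c) (diag c') with h' | h'
    · exact hdominate c c' hc hc' h h'
    · exact (hdominate c' c hc' hc h.symm h').symm
  have h1 : Nat.card {c : (Fin e → Fin m) × Fin m // Bp c}
      ≤ Nat.card {c : (Fin e → Fin m) × Fin m // P c} :=
    Nat.card_le_card_of_injective _ hF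
  refine h1.trans ?_
  rw [Nat.card_eq_fintype_card]
  -- counting
  have hcompl : (m - 1) ^ (e + 1)
      ≤ Fintype.card {c : (Fin e → Fin m) × Fin m // ¬ P c} := by
    have hG : Function.Injective
        (fun y : (Fin e → Fin (m - 1)) × Fin (m - 1) =>
          (⟨(fun j => (⟨(y.1 j : ℕ) + 1, by have := (y.1 j).isLt; omega⟩ : Fin m),
              (⟨(y.2 : ℕ), by have := y.2.isLt; omega⟩ : Fin m)), by
            rintro (⟨j, hj⟩ | h)
            · exact absurd hj (Nat.succ_ne_zero _)
            · have h2 := y.2.isLt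
              have h' : (y.2 : ℕ) = m - 1 := h
              omega⟩ : {c : (Fin e → Fin m) × Fin m // ¬ P c})) := by
      rintro ⟨a1, a2⟩ ⟨b1, b2⟩ hab
      simp only [Subtype.mk.injEq, Prod.mk.injEq] at hab
      obtain ⟨hab1, hab2⟩ := hab
      refine Prod.ext (funext fun j => Fin.ext ?_) (Fin.ext ?_)
      · have := congrArg (fun f => ((f j : Fin m) : ℕ)) hab1
        simpa using this
      · have := congrArg (fun x : Fin m => (x : ℕ)) hab2
        simpa using this
    calc (m - 1) ^ (e + 1)
        = Fintype.card ((Fin e → Fin (m - 1)) × Fin (m - 1)) := by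
          simp [pow_succ]
      _ ≤ _ := Fintype.card_le_of_injective _ hG
  have hsplit : Fintype.card {c : (Fin e → Fin m) × Fin m // P c}
      + Fintype.card {c : (Fin e → Fin m) × Fin m // ¬ P c}
      = m ^ (e + 1) := by
    rw [Fintype.card_subtype_compl]
    have hle := Fintype.card_subtype_le P
    have hcard : Fintype.card ((Fin e → Fin m) × Fin m) = m ^ (e + 1) := by
      simp [pow_succ]
    omega
  omega
end

section
/- Let x_1,...,x_n be points in [0,1]^d and m ≥ 2 an integer. Then the number of monotone labelings with m labels satisfies L(m, x_1,...,x_n) ≤ L(2, x_1,...,x_n)^{m-1}. -/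
/-!
A labeling `φ` with `m` labels is recovered from its `m - 1` threshold labelings
`i ↦ [t < φ i]`, `t < m - 1`, each of which is a monotone labeling with two labels; so the
labelings with `m` labels inject into `(m - 1)`-tuples of labelings with two labels.
-/

/-- `L m x` is the number of monotone labelings of the points `x 1, ..., x n ∈ ℝ^d`
with `m` labels: functions `φ` with `φ i ≤ φ j` whenever `x i ⪯ x j` coordinate-wise. -/
noncomputable def monotoneLabelingCount (d n m : ℕ) (x : Fin n → Fin d → ℝ) : ℕ :=
  Nat.card {φ : Fin n → Fin m // ∀ i j, (∀ k, x i k ≤ x j k) → φ i ≤ φ j}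

open Function

variable {ι : Type*} (r : ι → ι → Prop)

def MonotoneLabeling (m : ℕ) : Type _ :=
  {φ : ι → Fin m // ∀ i j, r i j → φ i ≤ φ j}

namespace MonotoneLabeling

variable {r} {m : ℕ}

def threshold (φ : MonotoneLabeling r m) (t : ℕ) : MonotoneLabeling r 2 :=
  ⟨fun i => if t < φ.1 i then 1 else 0, fun i j hij => by
    have hφ : (φ.1 i : ℕ) ≤ φ.1 j := φ.2 i j hij
    dsimp only
    split_ifs <;> first | exact le_rfl | exact Fin.zero_le _ | omega⟩

theorem threshold_val (φ : MonotoneLabeling r m) (t : ℕ) (i : ι) :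
    ((φ.threshold t).1 i : ℕ) = if t < φ.1 i then 1 else 0 :=
  apply_ite Fin.val _ _ _

theorem injective_threshold :
    Injective fun (φ : MonotoneLabeling r m) (t : Fin (m - 1)) => φ.threshold t := by
  intro φ ψ h
  refine Subtype.ext (funext fun i => Fin.ext ?_)
  have hsep (t : ℕ) (ht : t < m - 1) : t < φ.1 i ↔ t < ψ.1 i := by
    have := congrArg (fun χ : MonotoneLabeling r 2 => (χ.1 i : ℕ)) (congrFun h ⟨t, ht⟩)
    simp only [threshold_val] at this
    split_ifs at this <;> omega
  rcases lt_trichotomy (φ.1 i : ℕ) (ψ.1 i) with hlt | heq | hgt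
  · exact absurd ((hsep _ (by omega)).2 hlt) (lt_irrefl _)
  · exact heq
  · exact absurd ((hsep _ (by omega)).1 hgt) (lt_irrefl _)

theorem card_le_card_two_pow [Finite ι] :
    Nat.card (MonotoneLabeling r m) ≤ Nat.card (MonotoneLabeling r 2) ^ (m - 1) := by
  have : Finite (MonotoneLabeling r 2) := Subtype.finite
  calc Nat.card (MonotoneLabeling r m)
      ≤ Nat.card (Fin (m - 1) → MonotoneLabeling r 2) :=
        Nat.card_le_card_of_injective _ injective_threshold
    _ = Nat.card (MonotoneLabeling r 2) ^ (m - 1) := by simp [Nat.card_fun]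

end MonotoneLabeling

theorem stmt6_general (d n m : ℕ) (x : Fin n → Fin d → ℝ) :
    monotoneLabelingCount d n m x ≤ (monotoneLabelingCount d n 2 x) ^ (m - 1) :=
  MonotoneLabeling.card_le_card_two_pow

/-- For points `x_1,...,x_n ∈ [0,1]^d` and `m ≥ 2`, the number of monotone labelings
with `m` labels satisfies `L(m) ≤ L(2)^{m-1}`. -/
theorem stmt6 (d n m : ℕ) (hm : 2 ≤ m) (x : Fin n → Fin d → ℝ)
    (hx : ∀ i k, x i k ∈ Set.Icc (0 : ℝ) 1) :
    monotoneLabelingCount d n m x ≤ (monotoneLabelingCount d n 2 x) ^ (m - 1) :=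
  stmt6_general d n m x
end

section
/- Consider the linear program minimizing ∑_{i∈S^+}(1-F_i) + ∑_{i∈S^-} F_i over F ∈ [0,1]^n subject to F_i ≤ F_j for all pairs (i,j) in a fixed set E of constraints. Then there exists an optimal solution with all F_i ∈ {0,1}, and the optimal value equals that of the same problem with constraints F_i ∈ {0,1}. -/
open MeasureTheory

namespace Stmt11Aux

noncomputable def r (a t : ℝ) : ℝ := if t ≤ a then 1 else 0

lemma r_integrableOn (a : ℝ) : IntegrableOn (r a) (Set.Ioc 0 1) := by
  have he : r a = (Set.Iic a).indicator (fun _ => 1) := by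
    ext t; simp [r, Set.indicator_apply]
  rw [he]
  have hf : (volume.restrict (Set.Ioc (0:ℝ) 1)) (Set.Iic a) < ⊤ := by
    rw [Measure.restrict_apply measurableSet_Iic]
    exact lt_of_le_of_lt (measure_mono Set.inter_subset_right) (by simp [Real.volume_Ioc])
  exact (integrable_indicator_iff measurableSet_Iic).2 (integrableOn_const hf.ne)

lemma r_integral (a : ℝ) (h0 : 0 ≤ a) (h1 : a ≤ 1) :
    ∫ t in Set.Ioc (0:ℝ) 1, r a t = a := by
  have he : r a = (Set.Iic a).indicator (fun _ => 1) := by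
    ext t; simp [r, Set.indicator_apply]
  rw [he, setIntegral_indicator measurableSet_Iic]
  have h2 : Set.Ioc (0:ℝ) 1 ∩ Set.Iic a = Set.Ioc 0 a := by
    ext t; simp only [Set.mem_inter_iff, Set.mem_Ioc, Set.mem_Iic]
    constructor
    · rintro ⟨⟨h3, _⟩, h4⟩; exact ⟨h3, h4⟩
    · rintro ⟨h3, h4⟩; exact ⟨⟨h3, h4.trans h1⟩, h4⟩
  rw [h2]
  simp [Real.volume_Ioc, h0]

end Stmt11Aux

open Stmt11Aux

/-- The LP minimizing `∑_{i∈S⁺}(1 - F_i) + ∑_{i∈S⁻} F_i` over `F ∈ [0,1]^n` subject to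
monotonicity constraints `F_i ≤ F_j` for `(i,j) ∈ E` admits an optimal solution with all
`F_i ∈ {0,1}`; in particular the relaxation has the same optimal value as the integer
program. -/
theorem stmt11 (n : ℕ) (Splus : Finset (Fin n)) (E : Finset (Fin n × Fin n)) :
    ∃ F : Fin n → ℝ,
      (∀ i, F i ∈ Set.Icc (0 : ℝ) 1) ∧
      (∀ p ∈ E, F p.1 ≤ F p.2) ∧
      (∀ i, F i = 0 ∨ F i = 1) ∧
      (∀ G : Fin n → ℝ, (∀ i, G i ∈ Set.Icc (0 : ℝ) 1) → (∀ p ∈ E, G p.1 ≤ G p.2) →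
        (∑ i ∈ Splus, (1 - F i)) + ∑ i ∈ Splusᶜ, F i ≤
          (∑ i ∈ Splus, (1 - G i)) + ∑ i ∈ Splusᶜ, G i) := by
  classical
  set obj : (Fin n → ℝ) → ℝ := fun H => (∑ i ∈ Splus, (1 - H i)) + ∑ i ∈ Splusᶜ, H i with hobj
  set R : (Fin n → Bool) → (Fin n → ℝ) := fun f i => if f i then 1 else 0 with hR
  have hne : (Finset.univ.filter
      (fun f : Fin n → Bool => ∀ p ∈ E, f p.1 = true → f p.2 = true)).Nonempty :=
    ⟨fun _ => true, by simp⟩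
  obtain ⟨f₀, hf₀mem, hf₀min⟩ := Finset.exists_min_image _ (fun f => obj (R f)) hne
  have hf₀feas := (Finset.mem_filter.1 hf₀mem).2
  refine ⟨R f₀, ?_, ?_, ?_, ?_⟩
  · intro i; simp only [hR]; split <;> simp
  · intro p hp
    simp only [hR]
    rcases h1 : f₀ p.1 with _ | _
    · simp only [Bool.false_eq_true, if_false]
      split <;> norm_num
    · rw [hf₀feas p hp h1]
  · intro i; simp only [hR]; split <;> simp
  · intro G hGbox hGmono
    show obj (R f₀) ≤ obj G
    -- the "rounding cost" function
    set c : ℝ → ℝ := fun t => (∑ i ∈ Splus, (1 - r (G i) t)) + ∑ i ∈ Splusᶜ, r (G i) t with hc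
    have hint1 : ∀ i : Fin n, IntegrableOn (fun t => 1 - r (G i) t) (Set.Ioc (0:ℝ) 1) :=
      fun i => (integrableOn_const (by simp [Real.volume_Ioc])).sub (r_integrableOn _)
    have hintc : IntegrableOn c (Set.Ioc (0:ℝ) 1) := by
      refine Integrable.add ?_ ?_
      · exact integrable_finset_sum _ (fun i _ => hint1 i)
      · exact integrable_finset_sum _ (fun i _ => r_integrableOn _)
    have hcint : ∫ t in Set.Ioc (0:ℝ) 1, c t = obj G := by
      rw [hc]
      rw [integral_add (integrable_finset_sum _ (fun i _ => hint1 i))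
        (integrable_finset_sum _ (fun i _ => r_integrableOn _)),
        integral_finset_sum _ (fun i _ => hint1 i),
        integral_finset_sum _ (fun i _ => r_integrableOn (G i))]
      have h1 : ∀ i : Fin n, ∫ t in Set.Ioc (0:ℝ) 1, (1 - r (G i) t) = 1 - G i := by
        intro i
        rw [integral_sub (show IntegrableOn (fun _ : ℝ => (1:ℝ)) (Set.Ioc 0 1) volume from integrableOn_const (by simp [Real.volume_Ioc]))
          (r_integrableOn _), r_integral _ (hGbox i).1 (hGbox i).2]
        simp [Real.volume_Ioc]
      have h2 : ∀ i : Fin n, ∫ t in Set.Ioc (0:ℝ) 1, r (G i) t = G i :=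
        fun i => r_integral _ (hGbox i).1 (hGbox i).2
      rw [hobj]
      simp only [h1, h2]
    -- existence of a good threshold
    have hthr : ∃ t ∈ Set.Ioc (0:ℝ) 1, c t ≤ obj G := by
      by_contra hno
      push_neg at hno
      have hpos : 0 < ∫ t in Set.Ioc (0:ℝ) 1, (c t - obj G) := by
        refine (setIntegral_pos_iff_support_of_nonneg_ae ?_ ?_).2 ?_
        · refine (ae_restrict_iff' measurableSet_Ioc).2 (ae_of_all _ ?_)
          intro t ht
          exact sub_nonneg.2 (le_of_lt (hno t ht))
        · exact hintc.sub (integrableOn_const (by simp [Real.volume_Ioc]))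
        · have hsub : Set.Ioc (0:ℝ) 1 ⊆ Function.support (fun t => c t - obj G) := by
            intro t ht
            exact sub_ne_zero.2 (ne_of_gt (hno t ht))
          have : Function.support (fun t => c t - obj G) ∩ Set.Ioc (0:ℝ) 1 = Set.Ioc 0 1 := by
            rw [Set.inter_eq_right.2 hsub]
          rw [this]
          simp [Real.volume_Ioc]
      rw [integral_sub hintc (integrableOn_const (by simp [Real.volume_Ioc])),
        hcint] at hpos
      simp [Real.volume_Ioc] at hpos
    obtain ⟨t, ht, hct⟩ := hthr
    -- round G at threshold t
    set f₁ : Fin n → Bool := fun i => decide (t ≤ G i) with hf₁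
    have hf₁feas : ∀ p ∈ E, f₁ p.1 = true → f₁ p.2 = true := by
      intro p hp h
      simp only [hf₁, decide_eq_true_eq] at h ⊢
      exact h.trans (hGmono p hp)
    have hRf₁ : obj (R f₁) = c t := by
      have hRr : R f₁ = fun i => r (G i) t := by
        funext i
        simp [hR, hf₁, r]
      rw [hobj, hc, hRr]
    have hmin := hf₀min f₁ (Finset.mem_filter.2 ⟨Finset.mem_univ _, hf₁feas⟩)
    calc obj (R f₀) ≤ obj (R f₁) := hmin
      _ = c t := hRf₁
      _ ≤ obj G := hct
end

section
/- Let Q ⊆ ℝ^n be a finite set of vectors each of whose coordinates takes values in a set of at most L distinct reals arising as {(q(x_i,y_i,φ))_i : φ a monotone labeling}; if every function in a class F can be Q-approximated within ε in sup norm by a vector indexed by a monotone labeling with ⌈2/ε⌉ levels, then the minimal ε-net of Q has size at most L(⌈2/ε⌉, x_1,...,x_n). -/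
/-- ε-net upper bound via the labeling number: for fixed
`(x_1,y_1),...,(x_n,y_n) ∈ [0,1]^d × [0,1]`, the set
`Q = {((y_i - f(x_i))²)_i : f coordinate-wise monotone, [0,1]-valued}` admits an ε-net
of cardinality at most `L(⌈2/ε⌉, x_1,...,x_n)`, the number of monotone labelings of the
`x_i` with `⌈2/ε⌉` levels. -/
theorem stmt19 (d n : ℕ) (x : Fin n → Fin d → ℝ) (y : Fin n → ℝ)
    (hx : ∀ i k, x i k ∈ Set.Icc (0 : ℝ) 1) (hy : ∀ i, y i ∈ Set.Icc (0 : ℝ) 1)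
    (ε : ℝ) (hε : 0 < ε) :
    ∃ G : Finset (Fin n → ℝ),
      G.card ≤ Nat.card {φ : Fin n → Fin ⌈2 / ε⌉₊ //
          ∀ i j, (∀ k, x i k ≤ x j k) → φ i ≤ φ j} ∧
      ∀ f : (Fin d → ℝ) → ℝ, (∀ z, f z ∈ Set.Icc (0 : ℝ) 1) →
        (∀ z w : Fin d → ℝ, (∀ k, z k ≤ w k) → f z ≤ f w) →
        ∃ g ∈ G, ∀ i, |(y i - f (x i)) ^ 2 - g i| ≤ ε := by
  classical
  set m : ℕ := ⌈2 / ε⌉₊ with hmdef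
  have hm : 0 < m := Nat.ceil_pos.mpr (by positivity)
  have hmε : 2 ≤ (m : ℝ) * ε := by
    have := Nat.le_ceil (2 / ε)
    calc (2:ℝ) = (2/ε) * ε := by field_simp
    _ ≤ (m:ℝ) * ε := by
        apply mul_le_mul_of_nonneg_right _ hε.le
        exact this
  haveI : Fintype {φ : Fin n → Fin m // ∀ i j, (∀ k, x i k ≤ x j k) → φ i ≤ φ j} :=
    Fintype.ofFinite _
  refine ⟨Finset.image (fun φ : {φ : Fin n → Fin m // ∀ i j, (∀ k, x i k ≤ x j k) → φ i ≤ φ j} =>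
      fun i => (y i - (φ.1 i : ℝ) / m) ^ 2) Finset.univ, ?_, ?_⟩
  · calc _ ≤ (Finset.univ : Finset {φ : Fin n → Fin m // ∀ i j, (∀ k, x i k ≤ x j k) → φ i ≤ φ j}).card :=
        Finset.card_image_le
    _ = _ := by rw [Nat.card_eq_fintype_card, Finset.card_univ]
  · intro f hf hmono
    set φ : Fin n → Fin m := fun i =>
      ⟨min ⌊f (x i) * m⌋₊ (m - 1), lt_of_le_of_lt (min_le_right _ _) (Nat.sub_lt hm one_pos)⟩
      with hφdef
    have hφmono : ∀ i j, (∀ k, x i k ≤ x j k) → φ i ≤ φ j := by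
      intro i j hij
      have : f (x i) ≤ f (x j) := hmono _ _ hij
      have : ⌊f (x i) * m⌋₊ ≤ ⌊f (x j) * m⌋₊ :=
        Nat.floor_le_floor (by nlinarith [Nat.cast_nonneg (α := ℝ) m])
      exact Fin.mk_le_mk.mpr (min_le_min this le_rfl)
    refine ⟨_, Finset.mem_image_of_mem _ (Finset.mem_univ ⟨φ, hφmono⟩), ?_⟩
    intro i
    have hfi := hf (x i)
    have hyi := hy i
    set c : ℝ := ((φ i : ℕ) : ℝ) / m with hcdef
    have hmpos : (0:ℝ) < m := by exact_mod_cast hm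
    have hcle : c ≤ f (x i) := by
      have h1 : ((min ⌊f (x i) * m⌋₊ (m - 1) : ℕ) : ℝ) ≤ f (x i) * m := by
        calc ((min ⌊f (x i) * m⌋₊ (m - 1) : ℕ) : ℝ) ≤ (⌊f (x i) * m⌋₊ : ℝ) := by
              exact_mod_cast min_le_left _ _
        _ ≤ f (x i) * m := Nat.floor_le (by nlinarith [hfi.1])
      rw [hcdef]
      rw [div_le_iff₀ hmpos]
      exact h1
    have hclow : f (x i) - 1 / m ≤ c := by
      rcases le_or_gt ⌊f (x i) * m⌋₊ (m - 1) with h | h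
      · have : (φ i : ℕ) = ⌊f (x i) * m⌋₊ := by
          simp [hφdef, min_eq_left h]
        rw [hcdef, this, sub_le_iff_le_add, ← add_div, le_div_iff₀ hmpos]
        have := Nat.lt_floor_add_one (f (x i) * (m:ℝ))
        linarith
      · have : (φ i : ℕ) = m - 1 := by
          simp [hφdef, min_eq_right h.le]
        rw [hcdef, this]
        have hm1 : ((m - 1 : ℕ) : ℝ) = (m : ℝ) - 1 := by
          have : (1:ℕ) ≤ m := hm
          push_cast [this]; ring
        rw [hm1]
        have : f (x i) ≤ 1 := hfi.2
        rw [sub_le_iff_le_add]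
        calc f (x i) ≤ 1 := this
        _ ≤ ((m:ℝ) - 1) / m + 1 / m := by
            rw [← add_div]
            have : ((m:ℝ) - 1 + 1) / m = 1 := by field_simp; ring
            rw [this]
    have hc0 : 0 ≤ c := by positivity
    have hc1 : c ≤ 1 := hcle.trans hfi.2
    have h1m : 1 / (m:ℝ) ≤ ε / 2 := by
      rw [div_le_iff₀ hmpos]
      nlinarith
    have key : (y i - f (x i)) ^ 2 - (y i - c) ^ 2 = (c - f (x i)) * (2 * y i - f (x i) - c) := by
      ring
    have hb1 := mul_nonneg (by linarith : (0:ℝ) ≤ f (x i) - c)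
      (by linarith [hyi.2, hfi.1] : (0:ℝ) ≤ 2 - (2 * y i - f (x i) - c))
    have hb2 := mul_nonneg (by linarith : (0:ℝ) ≤ f (x i) - c)
      (by linarith [hyi.1, hfi.2] : (0:ℝ) ≤ (2 * y i - f (x i) - c) + 2)
    have hd : f (x i) - c ≤ ε / 2 := by linarith
    show |(y i - f (x i)) ^ 2 - (y i - c) ^ 2| ≤ ε
    rw [abs_le, key]
    constructor <;> nlinarith [hb1, hb2, hd]
end
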